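/- arXiv:2112.13346 — 4 statements merged into one kernel-verified Lean document; each statement's English description precedes it below -/
import Mathlib

section
/- Let θ, δ be real numbers and set a = sin²(θ). Then |sin²(θ+δ) − sin²(θ)| ≤ 2·|δ|·√(a·(1−a)) + δ². -/
theorem amplitude_estimation_error_bound (θ δ a : ℝ) (ha : a = Real.sin θ ^ 2) :
    |Real.sin (θ + δ) ^ 2 - Real.sin θ ^ 2| ≤
      2 * |δ| * Real.sqrt (a * (1 - a)) + δ ^ 2 := by
  subst ha
  have hs : Real.sqrt (Real.sin θ ^ 2 * (1 - Real.sin θ ^ 2)) = |Real.sin θ * Real.cos θ| := by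
    rw [show Real.sin θ ^ 2 * (1 - Real.sin θ ^ 2) = (Real.sin θ * Real.cos θ) ^ 2 by
      nlinarith [Real.sin_sq_add_cos_sq θ]]
    exact Real.sqrt_sq_eq_abs _
  rw [hs]
  have key : Real.sin (θ + δ) ^ 2 - Real.sin θ ^ 2 =
      Real.sin δ ^ 2 * (Real.cos θ ^ 2 - Real.sin θ ^ 2) +
        2 * (Real.sin θ * Real.cos θ) * (Real.sin δ * Real.cos δ) := by
    rw [Real.sin_add]
    nlinarith [Real.sin_sq_add_cos_sq δ]
  rw [key]
  have hδ : |Real.sin δ| ≤ |δ| := Real.abs_sin_le_abs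
  have h1 : |Real.sin δ ^ 2 * (Real.cos θ ^ 2 - Real.sin θ ^ 2)| ≤ δ ^ 2 := by
    rw [abs_mul]
    have hc : |Real.cos θ ^ 2 - Real.sin θ ^ 2| ≤ 1 := by
      rw [abs_le]
      constructor <;> nlinarith [Real.sin_sq_add_cos_sq θ, sq_nonneg (Real.sin θ),
        sq_nonneg (Real.cos θ)]
    have : |Real.sin δ ^ 2| ≤ δ ^ 2 := by
      rw [abs_sq]
      nlinarith [hδ, abs_nonneg (Real.sin δ), abs_nonneg δ, sq_abs (Real.sin δ), sq_abs δ]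
    nlinarith [abs_nonneg (Real.sin δ ^ 2), abs_nonneg (Real.cos θ ^ 2 - Real.sin θ ^ 2)]
  have h2 : |2 * (Real.sin θ * Real.cos θ) * (Real.sin δ * Real.cos δ)| ≤
      2 * |δ| * |Real.sin θ * Real.cos θ| := by
    have heq : |2 * (Real.sin θ * Real.cos θ) * (Real.sin δ * Real.cos δ)| =
        2 * |Real.sin θ * Real.cos θ| * (|Real.sin δ| * |Real.cos δ|) := by
      rw [abs_mul, abs_mul, abs_mul, abs_two, abs_mul]
    rw [heq]
    have hcd : |Real.cos δ| ≤ 1 := Real.abs_cos_le_one δ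
    have h0 : |Real.sin δ| * |Real.cos δ| ≤ |δ| := by
      nlinarith [abs_nonneg (Real.sin δ), abs_nonneg (Real.cos δ)]
    nlinarith [abs_nonneg (Real.sin θ * Real.cos θ)]
  calc |Real.sin δ ^ 2 * (Real.cos θ ^ 2 - Real.sin θ ^ 2) +
        2 * (Real.sin θ * Real.cos θ) * (Real.sin δ * Real.cos δ)|
      ≤ |Real.sin δ ^ 2 * (Real.cos θ ^ 2 - Real.sin θ ^ 2)| +
        |2 * (Real.sin θ * Real.cos θ) * (Real.sin δ * Real.cos δ)| := abs_add_le _ _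
    _ ≤ 2 * |δ| * |Real.sin θ * Real.cos θ| + δ ^ 2 := by linarith
end

section
/- Let a ∈ [0,1] and let θₐ ∈ [0, π/2] satisfy sin²(θₐ) = a. Let M be a positive integer, k a positive integer, and y an integer such that |π·y/M − θₐ| ≤ k·π/M. Then the estimate ã = sin²(π·y/M) satisfies |ã − a| ≤ 2πk·√(a(1−a))/M + k²·π²/M². -/
open Real

theorem est_amp_accuracy (a : ℝ) (ha : a ∈ Set.Icc (0 : ℝ) 1)
    (θa : ℝ) (hθa : θa ∈ Set.Icc (0 : ℝ) (π / 2)) (hsin : Real.sin θa ^ 2 = a)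
    (M : ℕ) (hM : 0 < M) (k : ℕ) (hk : 0 < k) (y : ℤ)
    (hy : |π * y / M - θa| ≤ k * π / M) :
    |Real.sin (π * y / M) ^ 2 - a| ≤
      2 * π * k * Real.sqrt (a * (1 - a)) / M + k ^ 2 * π ^ 2 / M ^ 2 := by
  set x : ℝ := π * y / M with hx
  set d : ℝ := x - θa with hd
  have hsin0 : 0 ≤ Real.sin θa := Real.sin_nonneg_of_nonneg_of_le_pi hθa.1
    (le_trans hθa.2 (by linarith [Real.pi_pos]))
  have hcos0 : 0 ≤ Real.cos θa := Real.cos_nonneg_of_mem_Icc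
    ⟨by linarith [hθa.1, Real.pi_pos], hθa.2⟩
  have hsqrt : Real.sqrt (a * (1 - a)) = Real.sin θa * Real.cos θa := by
    have h : a * (1 - a) = (Real.sin θa * Real.cos θa) ^ 2 := by
      have := Real.sin_sq_add_cos_sq θa
      nlinarith
    rw [h, Real.sqrt_sq (mul_nonneg hsin0 hcos0)]
  have hid : Real.sin x ^ 2 - a = Real.sin (x + θa) * Real.sin d := by
    rw [← hsin]
    have h1 := Real.sin_add x θa
    have h2 := Real.sin_sub x θa
    have h3 := Real.sin_sq_add_cos_sq x
    have h4 := Real.sin_sq_add_cos_sq θa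
    rw [hd, h2, h1]
    nlinarith
  have hdk : |d| ≤ k * π / M := hy
  have hε : (0:ℝ) ≤ k * π / M := by positivity
  have hsind : |Real.sin d| ≤ k * π / M := (Real.abs_sin_le_abs).trans hdk
  -- bound on sin(x+θa)
  have hsum : |Real.sin (x + θa)| ≤ 2 * Real.sin θa * Real.cos θa + |Real.sin d| := by
    have h : x + θa = (2 * θa) + d := by rw [hd]; ring
    rw [h, Real.sin_add, Real.sin_two_mul, Real.cos_two_mul]
    have h2 : 0 ≤ 2 * Real.sin θa * Real.cos θa := by positivity
    calc |2 * Real.sin θa * Real.cos θa * Real.cos d +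
          (2 * Real.cos θa ^ 2 - 1) * Real.sin d|
        ≤ |2 * Real.sin θa * Real.cos θa * Real.cos d| +
          |(2 * Real.cos θa ^ 2 - 1) * Real.sin d| := abs_add_le _ _
      _ ≤ 2 * Real.sin θa * Real.cos θa + |Real.sin d| := by
          rw [abs_mul, abs_mul, abs_mul]
          have hc1 : |Real.cos d| ≤ 1 := Real.abs_cos_le_one d
          have hc2 : |2 * Real.cos θa ^ 2 - 1| ≤ 1 := by
            rw [abs_le]
            have := Real.cos_le_one θa
            constructor <;> nlinarith
          have hn : (0:ℝ) ≤ |Real.sin d| := abs_nonneg _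
          have e1 : |(2:ℝ)| = 2 := by norm_num
          have e2 : |Real.sin θa| = Real.sin θa := abs_of_nonneg hsin0
          have e3 : |Real.cos θa| = Real.cos θa := abs_of_nonneg hcos0
          rw [e1, e2, e3, abs_mul]
          nlinarith
  have key : |Real.sin x ^ 2 - a| ≤
      2 * Real.sin θa * Real.cos θa * (k * π / M) + (k * π / M) ^ 2 := by
    rw [hid, abs_mul]
    have hn : (0:ℝ) ≤ |Real.sin d| := abs_nonneg _
    have h2 : 0 ≤ 2 * Real.sin θa * Real.cos θa := by positivity
    nlinarith [abs_nonneg (Real.sin (x + θa))]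
  rw [hsqrt]
  calc |Real.sin x ^ 2 - a|
      ≤ 2 * Real.sin θa * Real.cos θa * (k * π / M) + (k * π / M) ^ 2 := key
    _ = 2 * π * k * (Real.sin θa * Real.cos θa) / M + k ^ 2 * π ^ 2 / M ^ 2 := by
        field_simp
end

section
/- Let E be a real inner product space, let G and B be orthonormal vectors in E, let θ be a real number, and set ψ = sin(θ)·G + cos(θ)·B. Define the linear map S on the span of {G, B} that negates G and fixes B (S x = x − 2⟨x, G⟩·G), and define R as the reflection about ψ (R x = 2⟨x, ψ⟩·ψ − x). Let Q = R ∘ S. Then for every natural number m, Qᵐ ψ = sin((2m+1)·θ)·G + cos((2m+1)·θ)·B. -/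
/-! Writing `circlePoint G B α = sin α • G + cos α • B`, the map `S` acts on these points as the
reflection `α ↦ -α` and the reflection about `ψ = circlePoint G B θ` as `β ↦ 2θ - β`; so `R ∘ S`
acts as the rotation `α ↦ α + 2θ`, and iterating it from `α = θ` gives the angle `(2m+1)θ`. -/

open RealInnerProductSpace

section

variable {E : Type*} [NormedAddCommGroup E] [InnerProductSpace ℝ E]

noncomputable def circlePoint (G B : E) (α : ℝ) : E := Real.sin α • G + Real.cos α • B

theorem inner_circlePoint_left {G B : E} (hG : ‖G‖ = 1) (hGB : ⟪G, B⟫ = 0) (α : ℝ) :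
    ⟪circlePoint G B α, G⟫ = Real.sin α := by
  rw [real_inner_comm] at hGB
  simp [circlePoint, inner_add_left, real_inner_smul_left, hG, hGB]

theorem inner_circlePoint_circlePoint {G B : E} (hG : ‖G‖ = 1) (hB : ‖B‖ = 1)
    (hGB : ⟪G, B⟫ = 0) (α β : ℝ) :
    ⟪circlePoint G B α, circlePoint G B β⟫ = Real.cos (α - β) := by
  have hBG : ⟪B, G⟫ = 0 := by rwa [real_inner_comm]
  simp only [circlePoint, inner_add_left, inner_add_right, real_inner_smul_left,
    real_inner_smul_right, real_inner_self_eq_norm_sq, hG, hB, hGB, hBG, Real.cos_sub]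
  ring

theorem circlePoint_sub_two_inner_smul {G B : E} (hG : ‖G‖ = 1) (hGB : ⟪G, B⟫ = 0) (α : ℝ) :
    circlePoint G B α - (2 * ⟪circlePoint G B α, G⟫) • G = circlePoint G B (-α) := by
  rw [inner_circlePoint_left hG hGB, circlePoint, circlePoint, Real.sin_neg, Real.cos_neg]
  module

theorem two_inner_smul_circlePoint_sub {G B : E} (hG : ‖G‖ = 1) (hB : ‖B‖ = 1)
    (hGB : ⟪G, B⟫ = 0) (β θ : ℝ) :
    (2 * ⟪circlePoint G B β, circlePoint G B θ⟫) • circlePoint G B θ - circlePoint G B β =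
      circlePoint G B (2 * θ - β) := by
  obtain ⟨x, rfl⟩ : ∃ x, β = θ + x := ⟨β - θ, by ring⟩
  rw [inner_circlePoint_circlePoint hG hB hGB, add_sub_cancel_left,
    show 2 * θ - (θ + x) = θ - x by ring]
  simp only [circlePoint, Real.sin_add, Real.cos_add, Real.sin_sub, Real.cos_sub]
  module

end

theorem grover_rotation {E : Type*} [NormedAddCommGroup E] [InnerProductSpace ℝ E]
    (G B : E) (hG : ‖G‖ = 1) (hB : ‖B‖ = 1) (hGB : ⟪G, B⟫ = 0)
    (θ : ℝ) (ψ : E) (hψ : ψ = Real.sin θ • G + Real.cos θ • B)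
    (S R : E → E)
    (hS : ∀ x, S x = x - (2 * ⟪x, G⟫) • G)
    (hR : ∀ x, R x = (2 * ⟪x, ψ⟫) • ψ - x) :
    ∀ m : ℕ, (R ∘ S)^[m] ψ =
      Real.sin ((2 * m + 1) * θ) • G + Real.cos ((2 * m + 1) * θ) • B := by
  have hψ : ψ = circlePoint G B θ := hψ
  have hrot : Function.Semiconj (circlePoint G B) (· + 2 * θ) (R ∘ S) := fun α => by
    rw [Function.comp_apply, hS, circlePoint_sub_two_inner_smul hG hGB, hR, hψ,
      two_inner_smul_circlePoint_sub hG hB hGB, sub_neg_eq_add, add_comm]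
  intro m
  rw [hψ, ← hrot.iterate_right m θ, add_right_iterate_apply, nsmul_eq_mul,
    show θ + m * (2 * θ) = (2 * m + 1) * θ by ring]
  rfl
end

section
/- Let θ be a real number with 0 < θ ≤ π/2, set a = sin²(θ), and let m = ⌊π/(4θ)⌋. Then sin²((2m+1)·θ) ≥ 1 − a. -/
open Real

theorem grover_success_prob (θ : ℝ) (h1 : 0 < θ) (h2 : θ ≤ π / 2)
    (a : ℝ) (ha : a = Real.sin θ ^ 2) (m : ℤ) (hm : m = ⌊π / (4 * θ)⌋) :
    Real.sin ((2 * m + 1) * θ) ^ 2 ≥ 1 - a := by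
  have hml : (m : ℝ) ≤ π / (4 * θ) := hm ▸ Int.floor_le _
  have hmu : π / (4 * θ) < (m : ℝ) + 1 := hm ▸ Int.lt_floor_add_one _
  have h4θ : (0:ℝ) < 4 * θ := by linarith
  have hml' : (m : ℝ) * θ ≤ π / 4 := by
    rw [div_lt_iff₀ h4θ] at hmu
    rw [le_div_iff₀ h4θ] at hml
    nlinarith
  have hmu' : π / 4 < ((m : ℝ) + 1) * θ := by
    rw [div_lt_iff₀ h4θ] at hmu
    rw [div_lt_iff₀ (by norm_num : (0:ℝ) < 4)]
    nlinarith
  set x : ℝ := (2 * (m : ℝ) + 1) * θ - π / 2 with hx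
  have hxθ : |x| ≤ θ := by
    rw [abs_le, hx]
    constructor <;> nlinarith
  have hsin : Real.sin ((2 * (m:ℝ) + 1) * θ) = Real.cos x := by
    rw [hx]
    rw [show (2 * (m : ℝ) + 1) * θ - π / 2 = -(π / 2 - (2 * (m : ℝ) + 1) * θ) by ring,
      Real.cos_neg, Real.cos_pi_div_two_sub]
  have hcos : Real.cos θ ≤ Real.cos x := by
    rw [← Real.cos_abs x]
    apply Real.cos_le_cos_of_nonneg_of_le_pi (abs_nonneg x) (by linarith [Real.pi_pos]) hxθ
  have hcosθ : 0 ≤ Real.cos θ := Real.cos_nonneg_of_mem_Icc ⟨by linarith, h2⟩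
  have : Real.cos θ ^ 2 ≤ Real.cos x ^ 2 := by nlinarith
  have hcs := Real.sin_sq_add_cos_sq θ
  push_cast
  rw [hsin]
  nlinarith
end
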